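/- arXiv:2209.08512 — 2 statements merged into one kernel-verified Lean document; each statement's English description precedes it below -/
import Mathlib

section
/- Let f be a natural number, let N be a finite set of nodes with |N| = 3f + 1, and let F ⊆ N with |F| ≤ f. Let V be a type of values and let g : N → V assign to each node the (unique) value it votes for at a fixed sequence number. Suppose there are quorums Q1, Q2 ⊆ N with |Q1| ≥ 2f + 1 and |Q2| ≥ 2f + 1, and values v1, v2 ∈ V such that g i = v1 for every i ∈ Q1 \ F and g i = v2 for every i ∈ Q2 \ F. Then v1 = v2. (This abstracts the paper's consistency theorem: two logs o1, o2 from the same node with valid certificates cannot both exist with o1.n = o2.n unless they are equal, since each non-faulty node votes at most once per sequence number of a given node.) -/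
/-- Consistency of certified logs: if each non-faulty node votes for a
unique value at a fixed sequence number (recorded by `g`), and two quorums
of size `2f + 1` certify values `v1` and `v2` respectively (all non-faulty
quorum members voting that value), then `v1 = v2`. -/
theorem certified_values_eq {α V : Type*} [DecidableEq α] (f : ℕ) (N : Finset α)
    (hN : N.card = 3 * f + 1) (F : Finset α) (hFN : F ⊆ N) (hF : F.card ≤ f)
    (g : α → V) (Q1 Q2 : Finset α) (hQ1N : Q1 ⊆ N) (hQ2N : Q2 ⊆ N)
    (hQ1 : 2 * f + 1 ≤ Q1.card) (hQ2 : 2 * f + 1 ≤ Q2.card)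
    (v1 v2 : V)
    (hg1 : ∀ i ∈ Q1 \ F, g i = v1) (hg2 : ∀ i ∈ Q2 \ F, g i = v2) :
    v1 = v2 := by
  have hunion : (Q1 ∪ Q2).card ≤ 3 * f + 1 := hN ▸ Finset.card_le_card (Finset.union_subset hQ1N hQ2N)
  have hint : f + 1 ≤ (Q1 ∩ Q2).card := by
    have := Finset.card_union_add_card_inter Q1 Q2
    omega
  have hdiff : 0 < ((Q1 ∩ Q2) \ F).card := by
    have := Finset.le_card_sdiff F (Q1 ∩ Q2)
    omega
  obtain ⟨i, hi⟩ := Finset.card_pos.mp hdiff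
  rw [Finset.mem_sdiff, Finset.mem_inter] at hi
  rw [← hg1 i (Finset.mem_sdiff.mpr ⟨hi.1.1, hi.2⟩), hg2 i (Finset.mem_sdiff.mpr ⟨hi.1.2, hi.2⟩)]
end

section
/- Let f be a natural number, let ι be a finite set of indices with |ι| = 2f + 1, let F ⊆ ι with |F| ≤ f, and let t : ι → ℝ. Let m be the (f + 1)-th smallest value among the multiset {t i : i ∈ ι} (i.e., the entry at position f, zero-indexed, of the sorted-ascending list of these 2f + 1 values). Then there exists an index j ∈ ι with j ∉ F and m ≤ t j. -/
/-!
In the ascending sort of the `2f + 1` timestamps, the entries at positions `f, …, 2f` are all at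
least the trusted timestamp `m`, so at least `f + 1` indices report a timestamp `≥ m`. At most `f`
of them are faulty, so one of them is not.
-/

open Finset

theorem List.Pairwise.length_sub_le_countP_getD_le {β : Type*} [Preorder β] [DecidableLE β]
    {l : List β} (hl : l.Pairwise (· ≤ ·)) (k : ℕ) (d : β) :
    l.length - k ≤ l.countP (fun x => l.getD k d ≤ x) := by
  rcases lt_or_ge k l.length with hk | hk
  · have hdrop : ∀ x ∈ l.drop k, l[k] ≤ x := by
      have := hl.drop (i := k)
      rw [List.drop_eq_getElem_cons hk, List.pairwise_cons] at this
      simpa only [List.drop_eq_getElem_cons hk, List.forall_mem_cons, le_refl, true_and] using this.1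
    rw [List.getD_eq_getElem _ _ hk]
    calc l.length - k = (l.drop k).countP (fun x => l[k] ≤ x) := by
          rw [List.countP_eq_length.mpr (by simpa using hdrop), List.length_drop]
      _ ≤ l.countP (fun x => l[k] ≤ x) := (List.drop_sublist k l).countP_le
  · simp [Nat.sub_eq_zero_of_le hk]

theorem Multiset.card_sub_le_countP_getD_sort_le {β : Type*} [LinearOrder β] (s : Multiset β)
    (k : ℕ) (d : β) :
    s.card - k ≤ s.countP (fun x => (s.sort (· ≤ ·)).getD k d ≤ x) := by
  have h := (s.pairwise_sort (· ≤ ·)).length_sub_le_countP_getD_le k d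
  rwa [← Multiset.coe_countP, Multiset.sort_eq, Multiset.length_sort] at h

theorem Finset.card_sub_le_card_filter_getD_sort_le {α β : Type*} [LinearOrder β] (ι : Finset α)
    (t : α → β) (k : ℕ) (d : β) :
    #ι - k ≤ #{i ∈ ι | ((ι.val.map t).sort (· ≤ ·)).getD k d ≤ t i} := by
  have h := (ι.val.map t).card_sub_le_countP_getD_sort_le k d
  rwa [Multiset.card_map, Multiset.countP_map] at h

theorem trusted_timestamp_upper_general {α : Type*} (f : ℕ) (ι : Finset α)
    (hι : ι.card = 2 * f + 1) (F : Finset α) (hF : F.card ≤ f)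
    (t : α → ℝ)
    (m : ℝ) (hm : m = ((ι.val.map t).sort (· ≤ ·)).getD f 0) :
    ∃ j ∈ ι, j ∉ F ∧ m ≤ t j := by
  have hcount : f + 1 ≤ #{i ∈ ι | m ≤ t i} := by
    have := ι.card_sub_le_card_filter_getD_sort_le t f 0
    rw [← hm, hι] at this
    omega
  obtain ⟨j, hj, hjF⟩ := exists_mem_notMem_of_card_lt_card (hF.trans_lt hcount)
  rw [mem_filter] at hj
  exact ⟨j, hj.1, hjF, hj.2⟩

/-- The trusted timestamp (the `(f+1)`-th smallest of `2f + 1` reported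
timestamps, at most `f` of which come from faulty nodes) is bounded above
by some non-faulty node's timestamp. -/
theorem trusted_timestamp_upper {α : Type*} [DecidableEq α] (f : ℕ) (ι : Finset α)
    (hι : ι.card = 2 * f + 1) (F : Finset α) (hFι : F ⊆ ι) (hF : F.card ≤ f)
    (t : α → ℝ)
    (m : ℝ) (hm : m = ((ι.val.map t).sort (· ≤ ·)).getD f 0) :
    ∃ j ∈ ι, j ∉ F ∧ m ≤ t j :=
  trusted_timestamp_upper_general f ι hι F hF t m hm
end
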